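/- Let A be an n×n nonnegative real matrix with all row sums nonzero, and let M > 0, N ≥ 0, k ≥ 0 be integers. Write a_{ij}^{(M)} for the (i,j) entry of A^M. Then min over pairs (i,j) with a_{ij}^{(M)} > 0 of ( r_i(A^{k+M}) r_j(A^{k+N}) / ( r_i(A^k) r_j(A^k) ) )^{1/(M+N)} ≤ ρ(A) ≤ max over pairs (i,j) with a_{ij}^{(M)} > 0 of ( r_i(A^{k+M}) r_j(A^{k+N}) / ( r_i(A^k) r_j(A^k) ) )^{1/(M+N)}. -/

import Mathlib

/-!
Put `u = r(A^k)`, a positive vector, and `P = M + N`. Since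
`(A^P u)_i = ∑_j (A^M)_{ij} r_j(A^{k+N})` and `r_i(A^{k+M}) = ∑_j (A^M)_{ij} u_j`, the
mediant inequality over the support of row `i` of `A^M` gives
`min_j w_{ij} ≤ (A^P u)_i / u_i ≤ max_j w_{ij}`, where
`w_{ij} = r_i(A^{k+M}) r_j(A^{k+N}) / (u_i u_j)`. It remains to compare `ρ(A)^P = ρ(A^P)` with
the Collatz–Wielandt ratios `(A^P u)_i / u_i`: an eigenvector `v` of `A^P` evaluated at an
index maximizing `|v_i| / u_i` gives `|μ|^P ≤ max_i (A^P u)_i / u_i`, while `c u ≤ A^P u`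
gives `‖A^{Pm}‖ ≥ K c^m`, hence `ρ(A^P) ≥ c` by Gelfand's formula.
-/

open Matrix

/-- The spectral radius of a real square matrix: the maximum modulus of its
complex eigenvalues (elements of the spectrum of the matrix over `ℂ`). -/
noncomputable def specRad {n : ℕ} (A : Matrix (Fin n) (Fin n) ℝ) : ℝ :=
  sSup ((fun μ : ℂ => ‖μ‖) '' spectrum ℂ (A.map (fun x : ℝ => (x : ℂ))))

/-- `rowSum A i` is the `i`-th row sum of `A`. -/
noncomputable def rowSum {n : ℕ} (A : Matrix (Fin n) (Fin n) ℝ) (i : Fin n) : ℝ :=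
  ∑ j, A i j

/-- A square matrix is irreducible if it cannot be symmetrically permuted to a
nontrivial block upper-triangular form; equivalently, for every nonempty proper
subset `S` of indices there is a nonzero entry leading from `S` to its complement. -/
def IsIrred {n : ℕ} (A : Matrix (Fin n) (Fin n) ℝ) : Prop :=
  ∀ S : Set (Fin n), S.Nonempty → S ≠ Set.univ → ∃ i ∈ S, ∃ j ∈ Sᶜ, A i j ≠ 0

open Filter Topology

attribute [local instance] Matrix.linftyOpNormedRing Matrix.linftyOpNormedAlgebra

theorem ofReal_le_spectralRadius_of_mul_pow_le_norm {A : Type*} [NormedRing A]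
    [NormedAlgebra ℂ A] [CompleteSpace A] (a : A) {c K : ℝ} (hc : 0 ≤ c) (hK : 0 < K)
    (h : ∀ m : ℕ, K * c ^ m ≤ ‖a ^ m‖) : ENNReal.ofReal c ≤ spectralRadius ℂ a := by
  have hlim : Tendsto (fun m : ℕ => K ^ (1 / m : ℝ) * c) atTop (𝓝 c) := by
    simpa using ((Real.continuousAt_const_rpow hK.ne').tendsto.comp
      tendsto_one_div_atTop_nhds_zero_nat).mul_const c
  refine le_of_tendsto_of_tendsto ((ENNReal.continuous_ofReal.tendsto _).comp hlim)
    (spectrum.pow_norm_pow_one_div_tendsto_nhds_spectralRadius a) ?_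
  filter_upwards [eventually_ne_atTop 0] with m hm
  refine ENNReal.ofReal_le_ofReal ?_
  calc K ^ (1 / m : ℝ) * c = (K * c ^ m) ^ (1 / m : ℝ) := by
        rw [Real.mul_rpow hK.le (by positivity), one_div, Real.pow_rpow_inv_natCast hc hm]
    _ ≤ ‖a ^ m‖ ^ (1 / m : ℝ) := by gcongr; exact h m

theorem exists_pos_of_sum_pos {ι : Type*} [Fintype ι] {a : ι → ℝ} (h : 0 < ∑ j, a j) :
    ∃ j, 0 < a j := by
  obtain ⟨j, -, hj⟩ := Finset.exists_lt_of_sum_lt (f := fun _ => (0 : ℝ)) (by simpa using h)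
  exact ⟨j, hj⟩

theorem exists_pos_dotProduct_mul_le {ι : Type*} [Fintype ι] {a u : ι → ℝ} (ha : 0 ≤ a)
    (hu : ∀ j, 0 < u j) (hpos : ∃ j, 0 < a j) (s : ι → ℝ) :
    ∃ j, 0 < a j ∧ (a ⬝ᵥ s) * u j ≤ s j * (a ⬝ᵥ u) := by
  classical
  obtain ⟨j₀, hj₀⟩ := hpos
  obtain ⟨j, hj, hmax⟩ := (Finset.univ.filter (0 < a ·)).exists_max_image
    (fun l => s l / u l) ⟨j₀, by simpa using hj₀⟩
  refine ⟨j, (Finset.mem_filter.1 hj).2, ?_⟩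
  simp only [dotProduct, Finset.sum_mul, Finset.mul_sum]
  refine Finset.sum_le_sum fun l _ => ?_
  rcases (ha l : 0 ≤ a l).eq_or_lt with h | h
  · simp [← h]
  · have := (div_le_div_iff₀ (hu l) (hu j)).1 (hmax l (by simpa using h))
    nlinarith [mul_le_mul_of_nonneg_left this h.le]

theorem exists_pos_le_dotProduct_mul {ι : Type*} [Fintype ι] {a u : ι → ℝ} (ha : 0 ≤ a)
    (hu : ∀ j, 0 < u j) (hpos : ∃ j, 0 < a j) (s : ι → ℝ) :
    ∃ j, 0 < a j ∧ s j * (a ⬝ᵥ u) ≤ (a ⬝ᵥ s) * u j := by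
  obtain ⟨j, hj, h⟩ := exists_pos_dotProduct_mul_le ha hu hpos (-s)
  exact ⟨j, hj, by simpa [dotProduct_neg] using h⟩

namespace Matrix

variable {ι : Type*} [Fintype ι]

theorem mulVec_le_mulVec_of_nonneg {B : Matrix ι ι ℝ} (hB : ∀ i j, 0 ≤ B i j)
    {v w : ι → ℝ} (hvw : v ≤ w) : B *ᵥ v ≤ B *ᵥ w :=
  fun i => dotProduct_le_dotProduct_of_nonneg_left hvw (hB i)

variable [DecidableEq ι]

theorem map_ofReal_pow (B : Matrix ι ι ℝ) (m : ℕ) :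
    (B ^ m).map (fun x : ℝ => (x : ℂ)) = B.map (fun x : ℝ => (x : ℂ)) ^ m :=
  B.map_pow Complex.ofRealHom m

theorem exists_norm_mul_le_mulVec_of_mem_spectrum {B : Matrix ι ι ℝ} (hB : ∀ i j, 0 ≤ B i j)
    {u : ι → ℝ} (hu : ∀ i, 0 < u i) {μ : ℂ}
    (hμ : μ ∈ spectrum ℂ (B.map (fun x : ℝ => (x : ℂ)))) :
    ∃ i, ‖μ‖ * u i ≤ (B *ᵥ u) i := by
  rw [← spectrum_toLin', ← Module.End.hasEigenvalue_iff_mem_spectrum] at hμ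
  obtain ⟨v, hv⟩ := hμ.exists_hasEigenvector
  have hBv : B.map (fun x : ℝ => (x : ℂ)) *ᵥ v = μ • v := by
    simpa [toLin'_apply] using hv.apply_eq_smul
  obtain ⟨l, hl⟩ := Function.ne_iff.1 hv.2
  obtain ⟨i, -, hi⟩ :=
    Finset.univ.exists_max_image (fun l => ‖v l‖ / u l) ⟨l, Finset.mem_univ l⟩
  set t := ‖v i‖ / u i
  have ht : 0 < t := (div_pos (norm_pos_iff.2 hl) (hu l)).trans_le (hi l (Finset.mem_univ l))
  refine ⟨i, le_of_mul_le_mul_left ?_ ht⟩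
  calc t * (‖μ‖ * u i) = ‖(B.map (fun x : ℝ => (x : ℂ)) *ᵥ v) i‖ := by
        have hvi : t * u i = ‖v i‖ := div_mul_cancel₀ _ (hu i).ne'
        rw [hBv, Pi.smul_apply, smul_eq_mul, norm_mul, ← hvi]
        ring
    _ ≤ ∑ l, B i l * ‖v l‖ := by
        refine (norm_sum_le _ _).trans_eq (Finset.sum_congr rfl fun l _ => ?_)
        simp only [map_apply, norm_mul, Complex.norm_real, Real.norm_of_nonneg (hB i l)]
    _ ≤ ∑ l, B i l * (t * u l) := by
        gcongr with l
        · exact hB i l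
        · exact (div_le_iff₀ (hu l)).1 (hi l (Finset.mem_univ l))
    _ = t * (B *ᵥ u) i := by
        simp only [mulVec, dotProduct, Finset.mul_sum]
        exact Finset.sum_congr rfl fun l _ => by ring

theorem pow_smul_le_pow_mulVec {B : Matrix ι ι ℝ} (hB : ∀ i j, 0 ≤ B i j) {u : ι → ℝ}
    {c : ℝ} (hc : 0 ≤ c) (h : c • u ≤ B *ᵥ u) (m : ℕ) :
    c ^ m • u ≤ B ^ m *ᵥ u := by
  induction m with
  | zero => simp
  | succ m ih =>
    calc c ^ (m + 1) • u = c ^ m • (c • u) := by rw [pow_succ, mul_smul]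
      _ ≤ c ^ m • (B *ᵥ u) := smul_le_smul_of_nonneg_left h (by positivity)
      _ = B *ᵥ (c ^ m • u) := by rw [mulVec_smul]
      _ ≤ B *ᵥ (B ^ m *ᵥ u) := mulVec_le_mulVec_of_nonneg hB ih
      _ = B ^ (m + 1) *ᵥ u := by rw [mulVec_mulVec, pow_succ']

theorem exists_mem_spectrum_le_norm_of_smul_le_mulVec [Nonempty ι] {B : Matrix ι ι ℝ}
    (hB : ∀ i j, 0 ≤ B i j) {u : ι → ℝ} (hu : ∀ i, 0 < u i) {c : ℝ} (hc : 0 ≤ c)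
    (h : c • u ≤ B *ᵥ u) :
    ∃ μ ∈ spectrum ℂ (B.map (fun x : ℝ => (x : ℂ))), c ≤ ‖μ‖ := by
  set Bc := B.map (fun x : ℝ => (x : ℂ))
  set uc : ι → ℂ := fun i => u i
  obtain ⟨i⟩ := ‹Nonempty ι›
  have huc : 0 < ‖uc‖ :=
    (norm_pos_iff.2 (by simpa [uc] using (hu i).ne')).trans_le (norm_le_pi_norm uc i)
  have hnorm : ∀ m : ℕ, u i / ‖uc‖ * c ^ m ≤ ‖Bc ^ m‖ := by
    intro m
    rw [div_mul_eq_mul_div, div_le_iff₀ huc]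
    calc u i * c ^ m ≤ (B ^ m *ᵥ u) i := by
          simpa [mul_comm] using pow_smul_le_pow_mulVec hB hc h m i
      _ ≤ ‖(Bc ^ m *ᵥ uc) i‖ := by
        rw [← map_ofReal_pow]
        simp only [mulVec, dotProduct, map_apply, uc, ← Complex.ofReal_mul,
          ← Complex.ofReal_sum, Complex.norm_real, Real.norm_eq_abs]
        exact le_abs_self _
      _ ≤ ‖Bc ^ m *ᵥ uc‖ := norm_le_pi_norm _ i
      _ ≤ ‖Bc ^ m‖ * ‖uc‖ := linfty_opNorm_mulVec _ _
  have hρ := ofReal_le_spectralRadius_of_mul_pow_le_norm Bc hc (div_pos (hu i) huc) hnorm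
  obtain ⟨μ, hμ, hμρ⟩ :=
    spectrum.exists_nnnorm_eq_spectralRadius_of_nonempty (spectrum.nonempty Bc)
  refine ⟨μ, hμ, ?_⟩
  rw [← hμρ] at hρ
  simpa using (ENNReal.ofReal_le_iff_le_toReal ENNReal.coe_ne_top).1 hρ

end Matrix

section RowSum

variable {n : ℕ}

theorem rowSum_mul (X Y : Matrix (Fin n) (Fin n) ℝ) : rowSum (X * Y) = X *ᵥ rowSum Y := by
  ext i
  simp only [rowSum, mul_apply, mulVec, dotProduct, Finset.mul_sum]
  exact Finset.sum_comm

theorem rowSum_pow_add (A : Matrix (Fin n) (Fin n) ℝ) (m l : ℕ) :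
    rowSum (A ^ (m + l)) = A ^ m *ᵥ rowSum (A ^ l) := by
  rw [pow_add, rowSum_mul]

variable {A : Matrix (Fin n) (Fin n) ℝ}

theorem rowSum_pow_pos (hA : ∀ i j, 0 ≤ A i j) (hr : ∀ i, rowSum A i ≠ 0) (m : ℕ)
    (i : Fin n) : 0 < rowSum (A ^ m) i := by
  induction m generalizing i with
  | zero => simp [rowSum, one_apply]
  | succ m ih =>
    obtain ⟨j, hj⟩ :=
      exists_pos_of_sum_pos ((Finset.sum_nonneg fun j _ => hA i j).lt_of_ne' (hr i))
    rw [pow_succ', rowSum_mul]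
    exact Finset.sum_pos' (fun l _ => mul_nonneg (hA i l) (ih l).le)
      ⟨j, Finset.mem_univ _, mul_pos hj (ih j)⟩

theorem exists_pow_apply_pos (hA : ∀ i j, 0 ≤ A i j) (hr : ∀ i, rowSum A i ≠ 0) (m : ℕ)
    (i : Fin n) : ∃ j, 0 < (A ^ m) i j :=
  exists_pos_of_sum_pos (rowSum_pow_pos hA hr m i)

end RowSum

section RowSumRatio

variable {n : ℕ} {A : Matrix (Fin n) (Fin n) ℝ}

noncomputable def rowSumRatio (A : Matrix (Fin n) (Fin n) ℝ) (M N k : ℕ) (i j : Fin n) : ℝ :=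
  rowSum (A ^ (k + M)) i * rowSum (A ^ (k + N)) j / (rowSum (A ^ k) i * rowSum (A ^ k) j)

theorem rowSumRatio_nonneg (hA : ∀ i j, 0 ≤ A i j) (hr : ∀ i, rowSum A i ≠ 0) (M N k : ℕ)
    (i j : Fin n) : 0 ≤ rowSumRatio A M N k i j := by
  have h := rowSum_pow_pos hA hr
  exact div_nonneg (mul_nonneg (h _ i).le (h _ j).le) (mul_nonneg (h k i).le (h k j).le)

theorem rowSum_pow_add_eq_mulVec (A : Matrix (Fin n) (Fin n) ℝ) (M k : ℕ) :
    rowSum (A ^ (k + M)) = A ^ M *ᵥ rowSum (A ^ k) := by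
  rw [add_comm, rowSum_pow_add]

theorem pow_add_mulVec_rowSum (A : Matrix (Fin n) (Fin n) ℝ) (M N k : ℕ) :
    A ^ (M + N) *ᵥ rowSum (A ^ k) = A ^ M *ᵥ rowSum (A ^ (k + N)) := by
  rw [← rowSum_pow_add, ← rowSum_pow_add, add_assoc, add_comm N k]

theorem exists_norm_pow_le_rowSumRatio (hA : ∀ i j, 0 ≤ A i j) (hr : ∀ i, rowSum A i ≠ 0)
    (M N k : ℕ) {μ : ℂ} (hμ : μ ∈ spectrum ℂ (A.map (fun x : ℝ => (x : ℂ)))) :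
    ∃ i j, 0 < (A ^ M) i j ∧ ‖μ‖ ^ (M + N) ≤ rowSumRatio A M N k i j := by
  have hu := rowSum_pow_pos hA hr k
  have hμP : μ ^ (M + N) ∈ spectrum ℂ ((A ^ (M + N)).map (fun x : ℝ => (x : ℂ))) := by
    rw [map_ofReal_pow]
    exact spectrum.pow_image_subset _ _ ⟨μ, hμ, rfl⟩
  obtain ⟨i, hi⟩ := exists_norm_mul_le_mulVec_of_mem_spectrum (pow_apply_nonneg hA _) hu hμP
  obtain ⟨j, hj, hij⟩ := exists_pos_dotProduct_mul_le (pow_apply_nonneg hA M i) hu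
    (exists_pow_apply_pos hA hr M i) (rowSum (A ^ (k + N)))
  refine ⟨i, j, hj, ?_⟩
  rw [norm_pow, pow_add_mulVec_rowSum] at hi
  rw [rowSumRatio, le_div_iff₀ (mul_pos (hu i) (hu j)), rowSum_pow_add_eq_mulVec]
  calc ‖μ‖ ^ (M + N) * (rowSum (A ^ k) i * rowSum (A ^ k) j)
      = ‖μ‖ ^ (M + N) * rowSum (A ^ k) i * rowSum (A ^ k) j := by ring
    _ ≤ (A ^ M *ᵥ rowSum (A ^ (k + N))) i * rowSum (A ^ k) j := by gcongr; exact (hu j).le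
    _ ≤ rowSum (A ^ (k + N)) j * (A ^ M *ᵥ rowSum (A ^ k)) i := hij
    _ = _ := mul_comm _ _

theorem exists_rowSumRatio_le_norm_pow [Nonempty (Fin n)] (hA : ∀ i j, 0 ≤ A i j)
    (hr : ∀ i, rowSum A i ≠ 0) {M N : ℕ} (hMN : 0 < M + N) (k : ℕ) :
    ∃ i j, 0 < (A ^ M) i j ∧ ∃ μ ∈ spectrum ℂ (A.map (fun x : ℝ => (x : ℂ))),
      rowSumRatio A M N k i j ≤ ‖μ‖ ^ (M + N) := by
  classical
  have hu := rowSum_pow_pos hA hr k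
  obtain ⟨i₁⟩ := ‹Nonempty (Fin n)›
  obtain ⟨j₁, hj₁⟩ := exists_pow_apply_pos hA hr M i₁
  obtain ⟨⟨i₀, j₀⟩, h₀, hmin⟩ :=
    (Finset.univ.filter fun p : Fin n × Fin n => 0 < (A ^ M) p.1 p.2).exists_min_image
      (fun p => rowSumRatio A M N k p.1 p.2) ⟨(i₁, j₁), by simpa using hj₁⟩
  have hsub :
      rowSumRatio A M N k i₀ j₀ • rowSum (A ^ k) ≤ A ^ (M + N) *ᵥ rowSum (A ^ k) := by
    intro i
    obtain ⟨j, hj, hij⟩ := exists_pos_le_dotProduct_mul (pow_apply_nonneg hA M i) hu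
      (exists_pow_apply_pos hA hr M i) (rowSum (A ^ (k + N)))
    have hratio :
        rowSumRatio A M N k i j * rowSum (A ^ k) i ≤ (A ^ (M + N) *ᵥ rowSum (A ^ k)) i := by
      rw [rowSumRatio, rowSum_pow_add_eq_mulVec, pow_add_mulVec_rowSum,
        mul_comm (rowSum (A ^ k) i), ← div_div, div_mul_cancel₀ _ (hu i).ne',
        div_le_iff₀ (hu j), mul_comm]
      exact hij
    calc (rowSumRatio A M N k i₀ j₀ • rowSum (A ^ k)) i
        = rowSumRatio A M N k i₀ j₀ * rowSum (A ^ k) i := rfl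
      _ ≤ rowSumRatio A M N k i j * rowSum (A ^ k) i := by
        gcongr
        · exact (hu i).le
        · exact hmin (i, j) (by simpa using hj)
      _ ≤ _ := hratio
  obtain ⟨ν, hν, hle⟩ := exists_mem_spectrum_le_norm_of_smul_le_mulVec
    (pow_apply_nonneg hA _) hu (rowSumRatio_nonneg hA hr M N k i₀ j₀) hsub
  rw [map_ofReal_pow, spectrum.map_pow_of_pos _ hMN] at hν
  obtain ⟨μ, hμ, rfl⟩ := hν
  exact ⟨i₀, j₀, by simpa using h₀, μ, hμ, by rwa [norm_pow] at hle⟩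

end RowSumRatio

theorem specRad_nonneg {n : ℕ} (A : Matrix (Fin n) (Fin n) ℝ) : 0 ≤ specRad A :=
  Real.sSup_nonneg (by rintro _ ⟨μ, -, rfl⟩; exact norm_nonneg μ)

theorem norm_le_specRad {n : ℕ} {A : Matrix (Fin n) (Fin n) ℝ} {μ : ℂ}
    (hμ : μ ∈ spectrum ℂ (A.map (fun x : ℝ => (x : ℂ)))) : ‖μ‖ ≤ specRad A :=
  le_csSup ((Matrix.finite_spectrum _).image _).bddAbove ⟨μ, hμ, rfl⟩

section RowSumRatioRoots

variable {n : ℕ} {A : Matrix (Fin n) (Fin n) ℝ} {M N : ℕ}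

def rowSumRatioRoots (A : Matrix (Fin n) (Fin n) ℝ) (M N k : ℕ) : Set ℝ :=
  {x | ∃ i j : Fin n, 0 < (A ^ M) i j ∧ x = rowSumRatio A M N k i j ^ ((M : ℝ) + N)⁻¹}

theorem finite_rowSumRatioRoots (k : ℕ) : (rowSumRatioRoots A M N k).Finite :=
  (Set.finite_range fun p : Fin n × Fin n =>
    rowSumRatio A M N k p.1 p.2 ^ ((M : ℝ) + N)⁻¹).subset
      (by rintro _ ⟨i, j, -, rfl⟩; exact ⟨(i, j), rfl⟩)

theorem specRad_le_sSup_rowSumRatioRoots (hA : ∀ i j, 0 ≤ A i j) (hr : ∀ i, rowSum A i ≠ 0)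
    (hMN : 0 < M + N) (k : ℕ) : specRad A ≤ sSup (rowSumRatioRoots A M N k) := by
  have hP : (0 : ℝ) < ((M + N : ℕ) : ℝ) := by exact_mod_cast hMN
  refine Real.sSup_le ?_ (Real.sSup_nonneg ?_)
  · rintro _ ⟨μ, hμ, rfl⟩
    obtain ⟨i, j, hij, hle⟩ := exists_norm_pow_le_rowSumRatio hA hr M N k hμ
    refine le_csSup_of_le (finite_rowSumRatioRoots k).bddAbove ⟨i, j, hij, rfl⟩ ?_
    rw [← Nat.cast_add, Real.le_rpow_inv_iff_of_pos (norm_nonneg μ)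
      (rowSumRatio_nonneg hA hr M N k i j) hP, Real.rpow_natCast]
    exact hle
  · rintro _ ⟨i, j, -, rfl⟩
    exact Real.rpow_nonneg (rowSumRatio_nonneg hA hr M N k i j) _

theorem sInf_rowSumRatioRoots_le_specRad (hA : ∀ i j, 0 ≤ A i j) (hr : ∀ i, rowSum A i ≠ 0)
    (hMN : 0 < M + N) (k : ℕ) : sInf (rowSumRatioRoots A M N k) ≤ specRad A := by
  rcases isEmpty_or_nonempty (Fin n) with hn | hn
  · have hempty : rowSumRatioRoots A M N k = ∅ :=
      Set.eq_empty_iff_forall_notMem.2 fun _ ⟨i, _⟩ => isEmptyElim i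
    rw [hempty, Real.sInf_empty]
    exact specRad_nonneg A
  have hP : (0 : ℝ) < ((M + N : ℕ) : ℝ) := by exact_mod_cast hMN
  obtain ⟨i, j, hij, μ, hμ, hle⟩ := exists_rowSumRatio_le_norm_pow hA hr hMN k
  refine (csInf_le (finite_rowSumRatioRoots k).bddBelow ⟨i, j, hij, rfl⟩).trans
    (le_trans ?_ (norm_le_specRad hμ))
  rw [← Nat.cast_add, Real.rpow_inv_le_iff_of_pos (rowSumRatio_nonneg hA hr M N k i j)
    (norm_nonneg μ) hP, Real.rpow_natCast]
  exact hle

end RowSumRatioRoots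

/-- Theorem 7 of the paper, inequality part — generalized Xu–Xu bound.
For a nonnegative matrix `A` with all row sums nonzero and integers `M > 0`, `N ≥ 0`, `k ≥ 0`,
the spectral radius is bounded below and above by the min resp. max over pairs `(i,j)` with
`(A^M)_{ij} > 0` of `(r_i(A^{k+M}) r_j(A^{k+N}) / (r_i(A^k) r_j(A^k)))^{1/(M+N)}`. -/
theorem stmt6 {n : ℕ} (A : Matrix (Fin n) (Fin n) ℝ)
    (hA : ∀ i j, 0 ≤ A i j) (hr : ∀ i, rowSum A i ≠ 0) (M N k : ℕ) (hM : 0 < M) :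
    sInf {x : ℝ | ∃ i j : Fin n, 0 < (A ^ M) i j ∧
        x = (rowSum (A ^ (k + M)) i * rowSum (A ^ (k + N)) j /
              (rowSum (A ^ k) i * rowSum (A ^ k) j)) ^ (((M : ℝ) + N))⁻¹} ≤ specRad A ∧
    specRad A ≤ sSup {x : ℝ | ∃ i j : Fin n, 0 < (A ^ M) i j ∧
        x = (rowSum (A ^ (k + M)) i * rowSum (A ^ (k + N)) j /
              (rowSum (A ^ k) i * rowSum (A ^ k) j)) ^ (((M : ℝ) + N))⁻¹} := by
  have hMN : 0 < M + N := by omega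
  exact ⟨sInf_rowSumRatioRoots_le_specRad hA hr hMN k,
    specRad_le_sSup_rowSumRatioRoots hA hr hMN k⟩
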